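/- Let (Ω, F, P) be a probability space and G a sub-σ-field of F. The generalized conditional expectation operator E[·|G] is an averaging operator on L_σ(G): for any pair ξ, η ∈ L_σ(G) such that η·E[ξ|G] ∈ L_σ(G), one has E[η·E[ξ|G] | G] = E[η|G]·E[ξ|G] a.s. -/

import Mathlib

open MeasureTheory Filter
open scoped ENNReal NNReal

/-- A random variable `ξ` is σ-integrable with respect to the sub-σ-field `G` if there is a
sequence of sets `s n ∈ G` increasing to `Ω` such that `ξ · 1_{s n}` is integrable for each `n`. -/
def SigmaIntegrable {Ω : Type*} {mΩ : MeasurableSpace Ω} (μ : Measure Ω)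
    (G : MeasurableSpace Ω) (ξ : Ω → ℝ) : Prop :=
  ∃ s : ℕ → Set Ω, (∀ n, MeasurableSet[G] (s n)) ∧ Monotone s ∧
    (⋃ n, s n) = Set.univ ∧ ∀ n, Integrable ((s n).indicator ξ) μ

/-- `η` is (a version of) the generalized conditional expectation `E[ξ ∣ G]`:  `η` is
`G`-measurable and `E[ξ · 1_A] = E[η · 1_A]` for every `A ∈ G` such that `ξ · 1_A` is
integrable. -/
def IsGCE {Ω : Type*} {mΩ : MeasurableSpace Ω} (μ : Measure Ω)
    (G : MeasurableSpace Ω) (ξ η : Ω → ℝ) : Prop :=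
  Measurable[G] η ∧ ∀ A : Set Ω, MeasurableSet[G] A → Integrable (A.indicator ξ) μ →
    ∫ ω, A.indicator ξ ω ∂μ = ∫ ω, A.indicator η ω ∂μ

/-!
On a set `B ∈ G` on which `η`, `η ζ`, `E[η|G]` and `E[η ζ|G]` are all integrable, the generalized
conditional expectations agree a.e. with the ordinary conditional expectations of `1_B η` and
`1_B η ζ`, so there the claim is the pull-out property `E[ζ · 1_B η | G] = ζ · E[1_B η | G]` of
a `G`-measurable factor. Intersecting the localizing sequences of these four σ-integrable
functions gives countably many such sets `B n` exhausting `Ω`.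
-/

section GeneralizedCondExp

variable {Ω : Type*} {G mΩ : MeasurableSpace Ω} {μ : Measure Ω}

def IsExhaustion (G : MeasurableSpace Ω) (s : ℕ → Set Ω) : Prop :=
  (∀ n, MeasurableSet[G] (s n)) ∧ Monotone s ∧ (⋃ n, s n) = Set.univ

theorem IsExhaustion.inter {s t : ℕ → Set Ω} (hs : IsExhaustion G s) (ht : IsExhaustion G t) :
    IsExhaustion G fun n => s n ∩ t n := by
  obtain ⟨hsG, hs_mono, hs_univ⟩ := hs
  obtain ⟨htG, ht_mono, ht_univ⟩ := ht
  refine ⟨fun n => (hsG n).inter (htG n), fun m n hmn => Set.inter_subset_inter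
    (hs_mono hmn) (ht_mono hmn), Set.eq_univ_of_forall fun ω => ?_⟩
  obtain ⟨i, hi⟩ := Set.mem_iUnion.1 (hs_univ ▸ Set.mem_univ ω)
  obtain ⟨j, hj⟩ := Set.mem_iUnion.1 (ht_univ ▸ Set.mem_univ ω)
  exact Set.mem_iUnion.2 ⟨max i j, hs_mono (le_max_left i j) hi, ht_mono (le_max_right i j) hj⟩

theorem ae_eq_of_forall_ae_imp_of_iUnion_eq_univ {s : ℕ → Set Ω} {f g : Ω → ℝ}
    (hs : (⋃ n, s n) = Set.univ) (hfg : ∀ n, ∀ᵐ ω ∂μ, ω ∈ s n → f ω = g ω) : f =ᵐ[μ] g := by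
  filter_upwards [ae_all_iff.2 hfg] with ω hω
  obtain ⟨n, hn⟩ := Set.mem_iUnion.1 (hs ▸ Set.mem_univ ω)
  exact hω n hn

theorem sigmaIntegrable_iff (hG : G ≤ mΩ) {f : Ω → ℝ} :
    SigmaIntegrable μ G f ↔ ∃ s, IsExhaustion G s ∧ ∀ n, IntegrableOn f (s n) μ := by
  constructor
  · rintro ⟨s, hsG, hs_mono, hs_univ, hs_int⟩
    exact ⟨s, ⟨hsG, hs_mono, hs_univ⟩,
      fun n => (integrable_indicator_iff (hG _ (hsG n))).1 (hs_int n)⟩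
  · rintro ⟨s, ⟨hsG, hs_mono, hs_univ⟩, hs_int⟩
    exact ⟨s, hsG, hs_mono, hs_univ,
      fun n => (integrable_indicator_iff (hG _ (hsG n))).2 (hs_int n)⟩

theorem sigmaIntegrable_of_measurable [IsFiniteMeasure μ] (hG : G ≤ mΩ) {f : Ω → ℝ}
    (hf : Measurable[G] f) : SigmaIntegrable μ G f := by
  have h_meas (n : ℕ) : MeasurableSet[G] {ω | |f ω| ≤ n} :=
    (measurable_abs.comp hf) measurableSet_Iic
  refine (sigmaIntegrable_iff hG).2 ⟨fun n => {ω | |f ω| ≤ n}, ⟨h_meas,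
    fun m n hmn ω (hω : |f ω| ≤ m) => hω.trans (Nat.cast_le.2 hmn), ?_⟩, fun n => ?_⟩
  · exact Set.eq_univ_of_forall fun ω => Set.mem_iUnion.2 (exists_nat_ge |f ω|)
  · refine Measure.integrableOn_of_bounded (M := n) (measure_ne_top _ _)
      (hf.mono hG le_rfl).aestronglyMeasurable ?_
    exact (ae_restrict_iff' (hG _ (h_meas n))).2 (Eventually.of_forall fun ω hω => hω)

theorem IsGCE.setIntegral_eq {f g : Ω → ℝ} (h : IsGCE μ G f g) (hG : G ≤ mΩ) {A : Set Ω}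
    (hA : MeasurableSet[G] A) (hf : IntegrableOn f A μ) :
    ∫ ω in A, f ω ∂μ = ∫ ω in A, g ω ∂μ := by
  rw [← integral_indicator (hG _ hA), ← integral_indicator (hG _ hA)]
  exact h.2 A hA ((integrable_indicator_iff (hG _ hA)).2 hf)

theorem IsGCE.indicator_ae_eq_condExp {f g : Ω → ℝ} (h : IsGCE μ G f g) (hG : G ≤ mΩ)
    [SigmaFinite (μ.trim hG)] {B : Set Ω} (hB : MeasurableSet[G] B)
    (hf : IntegrableOn f B μ) (hg : IntegrableOn g B μ) :
    B.indicator g =ᵐ[μ] μ[B.indicator f | G] := by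
  have hBm : MeasurableSet[mΩ] B := hG _ hB
  refine ae_eq_condExp_of_forall_setIntegral_eq hG (hf.integrable_indicator hBm)
    (fun A _ _ => (hg.integrable_indicator hBm).integrableOn) (fun A hA _ => ?_)
    ((h.1.indicator hB).stronglyMeasurable.aestronglyMeasurable)
  rw [setIntegral_indicator hBm, setIntegral_indicator hBm]
  exact (h.setIntegral_eq hG (hA.inter hB) (hf.mono_set Set.inter_subset_right)).symm

theorem IsGCE.ae_eq_mul_on {η ζ θ κ : Ω → ℝ} (hG : G ≤ mΩ) [SigmaFinite (μ.trim hG)]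
    (hζ : Measurable[G] ζ) (hθ : IsGCE μ G η θ) (hκ : IsGCE μ G (fun ω => η ω * ζ ω) κ)
    {B : Set Ω} (hB : MeasurableSet[G] B) (hη : IntegrableOn η B μ)
    (hηζ : IntegrableOn (fun ω => η ω * ζ ω) B μ) (hθB : IntegrableOn θ B μ)
    (hκB : IntegrableOn κ B μ) :
    ∀ᵐ ω ∂μ, ω ∈ B → κ ω = θ ω * ζ ω := by
  have hBm : MeasurableSet[mΩ] B := hG _ hB
  have h_split : B.indicator (fun ω => η ω * ζ ω) = ζ * B.indicator η := by
    ext ω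
    by_cases hω : ω ∈ B <;> simp [hω, mul_comm]
  have h_pull : μ[ζ * B.indicator η | G] =ᵐ[μ] ζ * μ[B.indicator η | G] :=
    condExp_mul_of_stronglyMeasurable_left hζ.stronglyMeasurable
      (h_split ▸ hηζ.integrable_indicator hBm) (hη.integrable_indicator hBm)
  filter_upwards [hκ.indicator_ae_eq_condExp hG hB hηζ hκB,
    hθ.indicator_ae_eq_condExp hG hB hη hθB, h_pull] with ω hκω hθω h_pullω hω
  rw [h_split, Set.indicator_of_mem hω] at hκω
  rw [Set.indicator_of_mem hω] at hθω
  rw [hκω, h_pullω, Pi.mul_apply, ← hθω, mul_comm]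

end GeneralizedCondExp

theorem generalized_condExp_averaging_general
    {Ω : Type*} [mΩ : MeasurableSpace Ω] (μ : Measure Ω) [IsProbabilityMeasure μ]
    (G : MeasurableSpace Ω) (hG : G ≤ mΩ)
    (ξ η ζ θ κ : Ω → ℝ)
    (hησ : SigmaIntegrable μ G η)
    (hζ : IsGCE μ G ξ ζ) (hθ : IsGCE μ G η θ)
    (hprod : SigmaIntegrable μ G fun ω => η ω * ζ ω)
    (hκ : IsGCE μ G (fun ω => η ω * ζ ω) κ) :
    κ =ᵐ[μ] fun ω => θ ω * ζ ω := by
  obtain ⟨s, hs, hηs⟩ := (sigmaIntegrable_iff hG).1 hησ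
  obtain ⟨t, ht, hprod_t⟩ := (sigmaIntegrable_iff hG).1 hprod
  obtain ⟨u, hu, hθu⟩ :=
    (sigmaIntegrable_iff hG).1 (sigmaIntegrable_of_measurable (μ := μ) hG hθ.1)
  obtain ⟨v, hv, hκv⟩ :=
    (sigmaIntegrable_iff hG).1 (sigmaIntegrable_of_measurable (μ := μ) hG hκ.1)
  obtain ⟨hBG, -, hB_univ⟩ := ((hs.inter ht).inter hu).inter hv
  refine ae_eq_of_forall_ae_imp_of_iUnion_eq_univ hB_univ fun n => ?_
  exact hθ.ae_eq_mul_on hG hζ.1 hκ (hBG n) ((hηs n).mono_set fun _ h => h.1.1.1)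
    ((hprod_t n).mono_set fun _ h => h.1.1.2) ((hθu n).mono_set fun _ h => h.1.2)
    ((hκv n).mono_set fun _ h => h.2)

/-- The generalized conditional expectation operator is an averaging operator:
`E[η · E[ξ∣G] ∣ G] = E[η∣G] · E[ξ∣G]` a.s. whenever `ξ, η, η · E[ξ∣G] ∈ L_σ(G)`. -/
theorem generalized_condExp_averaging
    {Ω : Type*} [mΩ : MeasurableSpace Ω] (μ : Measure Ω) [IsProbabilityMeasure μ]
    (G : MeasurableSpace Ω) (hG : G ≤ mΩ)
    (ξ η ζ θ κ : Ω → ℝ)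
    (hξm : Measurable[mΩ] ξ) (hξσ : SigmaIntegrable μ G ξ)
    (hηm : Measurable[mΩ] η) (hησ : SigmaIntegrable μ G η)
    (hζ : IsGCE μ G ξ ζ) (hθ : IsGCE μ G η θ)
    (hprod : SigmaIntegrable μ G fun ω => η ω * ζ ω)
    (hκ : IsGCE μ G (fun ω => η ω * ζ ω) κ) :
    κ =ᵐ[μ] fun ω => θ ω * ζ ω :=
  generalized_condExp_averaging_general (mΩ := mΩ) μ G hG ξ η ζ θ κ hησ hζ hθ hprod hκ
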